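/- Let S be a set and R an equivalence relation on S. Then the lifting of R to D(S) × D(S) is an equivalence relation on D(S): it is reflexive, symmetric, and transitive. -/

import Mathlib

/-!
Lifting preserves the mass of every `R`-closed set of states: this holds for the generators
`(δ_s, δ_t)` with `s R t` and survives convex combinations. Conversely, for an equivalence `R`,
if `μ` and `ν` give each class the same mass, then `w (u, v) = μ u * ν v / μ [u]` for `u R v`
(with `μ [u]` the mass of the class of `u`) is a coupling of `μ` and `ν` supported on `R`;
splitting it into point masses writes `μ` and `ν` as the same convex combination of pairs
`(δ_u, δ_v)` with `u R v`. So the lifting relates `μ` and `ν` iff their class masses agree,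
and that is an equivalence relation.
-/

/-- A finitely supported probability distribution over `S`. -/
structure ProbDist (S : Type) where
  f : S → ℝ
  nonneg : ∀ s, 0 ≤ f s
  finSupp : (Function.support f).Finite
  sum_one : ∑ᶠ s, f s = 1

/-- The point distribution assigning probability 1 to `s`. -/
noncomputable def ProbDist.point {S : Type} (s : S) : ProbDist S where
  f := Set.indicator {s} (fun _ => (1 : ℝ))
  nonneg t := Set.indicator_nonneg (fun _ _ => zero_le_one) t
  finSupp := (Set.finite_singleton s).subset (by
    intro t ht
    by_contra h
    exact ht (Set.indicator_of_notMem h _))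
  sum_one := by
    rw [finsum_eq_single _ s]
    · simp
    · intro x hx
      simp [Set.indicator_of_notMem, hx]

/-- The lifting of a relation `R ⊆ S × D(S)` to `D(S) × D(S)`:
the smallest relation containing `(δ_s, ν)` whenever `R s ν`, and closed under
finite convex combinations. -/
inductive ProbDist.Lift {S : Type} (R : S → ProbDist S → Prop) :
    ProbDist S → ProbDist S → Prop
  | basic {s : S} {ν : ProbDist S} : R s ν → ProbDist.Lift R (ProbDist.point s) ν
  | lin {n : ℕ} (p : Fin n → ℝ) (μs νs : Fin n → ProbDist S)
      (hp : ∀ i, p i ∈ Set.Icc (0 : ℝ) 1) (hpsum : ∑ i, p i = 1)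
      (h : ∀ i, ProbDist.Lift R (μs i) (νs i)) {μ ν : ProbDist S}
      (hμ : ∀ s, μ.f s = ∑ i, p i * (μs i).f s)
      (hν : ∀ s, ν.f s = ∑ i, p i * (νs i).f s) :
      ProbDist.Lift R μ ν

/-- Lifting of a relation `R ⊆ S × S` on states: first form
`R̂ = {(s, δ_t) : s R t} ⊆ S × D(S)`, then lift. -/
def ProbDist.LiftRel {S : Type} (R : S → S → Prop) : ProbDist S → ProbDist S → Prop :=
  ProbDist.Lift (fun s ν => ∃ t, R s t ∧ ν = ProbDist.point t)

namespace ProbDist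

open Function

variable {S : Type}

@[simp]
lemma point_apply_self (t : S) : (point t).f t = 1 := by
  simp [point]

@[simp]
lemma point_apply_of_ne {s t : S} (h : s ≠ t) : (point t).f s = 0 := by
  simp [point, h]

noncomputable def mass (μ : ProbDist S) (A : Set S) : ℝ := ∑ᶠ t ∈ A, μ.f t

lemma mass_eq_finsum_indicator (μ : ProbDist S) (A : Set S) :
    μ.mass A = ∑ᶠ t, A.indicator μ.f t :=
  finsum_mem_def A μ.f

lemma finite_support_indicator (μ : ProbDist S) (A : Set S) :
    (support (A.indicator μ.f)).Finite :=
  μ.finSupp.subset (Set.support_indicator.trans_subset Set.inter_subset_right)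

lemma mass_nonneg (μ : ProbDist S) (A : Set S) : 0 ≤ μ.mass A :=
  finsum_nonneg fun t => finsum_nonneg fun _ => μ.nonneg t

lemma apply_le_mass (μ : ProbDist S) {A : Set S} {s : S} (hs : s ∈ A) :
    μ.f s ≤ μ.mass A := by
  rw [mass_eq_finsum_indicator, ← Set.indicator_of_mem hs μ.f]
  exact single_le_finsum s (μ.finite_support_indicator A)
    (Set.indicator_nonneg fun t _ => μ.nonneg t)

lemma mass_point (u : S) (A : Set S) : (point u).mass A = A.indicator 1 u := by
  rw [mass_eq_finsum_indicator, finsum_eq_single _ u fun t ht => by simp [ht]]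
  by_cases hu : u ∈ A <;> simp [hu]

lemma mass_eq_sum_mul {n : ℕ} (p : Fin n → ℝ) (μs : Fin n → ProbDist S) {μ : ProbDist S}
    (hμ : ∀ s, μ.f s = ∑ i, p i * (μs i).f s) (A : Set S) :
    μ.mass A = ∑ i, p i * (μs i).mass A := by
  have hpt : ∀ t, A.indicator μ.f t = ∑ i, p i * A.indicator (μs i).f t := fun t => by
    by_cases ht : t ∈ A <;> simp [ht, hμ]
  have hfin : ∀ i ∈ Finset.univ, (support fun t => p i * A.indicator (μs i).f t).Finite :=
    fun i _ => ((μs i).finite_support_indicator A).subset (support_mul_subset_right _ _)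
  simp_rw [mass_eq_finsum_indicator, hpt, mul_finsum]
  exact finsum_sum_comm _ _ hfin

theorem mass_eq_of_liftRel {R : S → S → Prop} {A : Set S}
    (hA : ∀ s t, R s t → (s ∈ A ↔ t ∈ A)) {μ ν : ProbDist S} (h : LiftRel R μ ν) :
    μ.mass A = ν.mass A := by
  induction h with
  | basic h =>
    obtain ⟨t, hst, rfl⟩ := h
    classical
    simp only [mass_point, Set.indicator_apply, hA _ _ hst, Pi.one_apply]
  | lin p μs νs _ _ _ hμ hν ih =>
    simp only [mass_eq_sum_mul p μs hμ, mass_eq_sum_mul p νs hν, ih]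

theorem Lift.of_finsum {R : S → ProbDist S → Prop} {ι : Type*} (w : ι → ℝ)
    (hw0 : ∀ i, 0 ≤ w i) (hwfin : (support w).Finite) (hw1 : ∑ᶠ i, w i = 1)
    (μs νs : ι → ProbDist S) (h : ∀ i, w i ≠ 0 → Lift R (μs i) (νs i))
    {μ ν : ProbDist S} (hμ : ∀ s, μ.f s = ∑ᶠ i, w i * (μs i).f s)
    (hν : ∀ s, ν.f s = ∑ᶠ i, w i * (νs i).f s) :
    Lift R μ ν := by
  set T := hwfin.toFinset
  set e : Fin T.card ≃ T := T.equivFin.symm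
  have reindex (g : ι → ℝ) (hg : support g ⊆ support w) :
      ∑ᶠ i, g i = ∑ k, g (e k) := by
    rw [finsum_eq_sum_of_support_subset g (s := T) (by simpa [T] using hg),
      ← Finset.sum_coe_sort T, Equiv.sum_comp e (fun i => g i)]
  have hsupp (ξs : ι → ProbDist S) (s : S) :
      support (fun i => w i * (ξs i).f s) ⊆ support w :=
    support_mul_subset_left _ _
  refine Lift.lin (fun k => w (e k)) (μs ∘ (↑) ∘ e) (νs ∘ (↑) ∘ e)
    (fun k => ⟨hw0 _, hw1 ▸ single_le_finsum _ hwfin hw0⟩) ?_ ?_ ?_ ?_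
  · rw [← hw1, reindex w subset_rfl]
  · exact fun k => h _ (hwfin.mem_toFinset.1 (e k).2)
  · exact fun s => (hμ s).trans (reindex _ (hsupp μs s))
  · exact fun s => (hν s).trans (reindex _ (hsupp νs s))

lemma finsum_mul_point_fst_apply {T : Type} (w : S × T → ℝ) (hw : (support w).Finite)
    (s : S) : ∑ᶠ x, w x * (point x.1).f s = ∑ᶠ v, w (s, v) := by
  rw [finsum_curry _ (hw.subset (support_mul_subset_left _ _)),
    finsum_eq_single _ s fun u hu => by simp [Ne.symm hu]]
  simp

theorem LiftRel.of_coupling {R : S → S → Prop} {μ ν : ProbDist S} (w : S × S → ℝ)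
    (hw0 : ∀ x, 0 ≤ w x) (hwfin : (support w).Finite) (hwR : ∀ x, w x ≠ 0 → R x.1 x.2)
    (hfst : ∀ u, ∑ᶠ v, w (u, v) = μ.f u) (hsnd : ∀ v, ∑ᶠ u, w (u, v) = ν.f v) :
    LiftRel R μ ν := by
  have hswap : (support (w ∘ Prod.swap)).Finite := hwfin.preimage Prod.swap_injective.injOn
  refine Lift.of_finsum w hw0 hwfin ?_ (fun x => point x.1) (fun x => point x.2)
    (fun x hx => Lift.basic ⟨x.2, hwR x hx, rfl⟩) (fun s => ?_) (fun s => ?_)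
  · rw [finsum_curry w hwfin, finsum_congr hfst, μ.sum_one]
  · rw [finsum_mul_point_fst_apply w hwfin, hfst]
  · rw [← finsum_comp_equiv (Equiv.prodComm S S)]
    exact (finsum_mul_point_fst_apply (w ∘ Prod.swap) hswap s).trans (hsnd s) |>.symm

open Classical in
noncomputable def classCoupling (R : S → S → Prop) (μ ν : ProbDist S) (x : S × S) : ℝ :=
  if R x.1 x.2 then μ.f x.1 * ν.f x.2 / μ.mass {t | R x.1 t} else 0

section classCoupling

variable {R : S → S → Prop} {μ ν : ProbDist S}

lemma classCoupling_nonneg (x : S × S) : 0 ≤ classCoupling R μ ν x := by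
  unfold classCoupling
  split_ifs
  · exact div_nonneg (mul_nonneg (μ.nonneg _) (ν.nonneg _)) (μ.mass_nonneg _)
  · exact le_rfl

lemma finite_support_classCoupling : (support (classCoupling R μ ν)).Finite := by
  refine (μ.finSupp.prod ν.finSupp).subset fun x hx => ?_
  by_contra hx'
  simp only [Set.mem_prod, mem_support, not_and_or, not_not] at hx'
  rcases hx' with h | h <;> simp [classCoupling, h] at hx

lemma rel_of_classCoupling_ne_zero {x : S × S} (hx : classCoupling R μ ν x ≠ 0) :
    R x.1 x.2 := by
  by_contra h
  simp [classCoupling, h] at hx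

lemma classCoupling_swap (hR : Equivalence R)
    (h : ∀ s, μ.mass {t | R s t} = ν.mass {t | R s t}) (u v : S) :
    classCoupling R μ ν (u, v) = classCoupling R ν μ (v, u) := by
  unfold classCoupling
  by_cases huv : R u v
  · have hcls : {t | R u t} = {t | R v t} :=
      Set.ext fun t => ⟨hR.trans (hR.symm huv), hR.trans huv⟩
    simp only [huv, hR.symm huv, if_true, hcls, h v]
    ring
  · simp [huv, mt hR.symm huv]

lemma finsum_classCoupling_fst (hR : Equivalence R)
    (h : ∀ s, μ.mass {t | R s t} = ν.mass {t | R s t}) (u : S) :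
    ∑ᶠ v, classCoupling R μ ν (u, v) = μ.f u := by
  by_cases hc : μ.mass {t | R u t} = 0
  · have hu : μ.f u = 0 := le_antisymm (hc ▸ μ.apply_le_mass (hR.refl u)) (μ.nonneg u)
    simp [classCoupling, hu]
  · calc ∑ᶠ v, classCoupling R μ ν (u, v)
        = μ.f u / μ.mass {t | R u t} * ν.mass {t | R u t} := by
          rw [ν.mass_eq_finsum_indicator, mul_finsum]
          refine finsum_congr fun v => ?_
          by_cases huv : R u v <;> simp [classCoupling, huv]
          ring
      _ = μ.f u := by rw [← h u, div_mul_cancel₀ _ hc]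

lemma finsum_classCoupling_snd (hR : Equivalence R)
    (h : ∀ s, μ.mass {t | R s t} = ν.mass {t | R s t}) (v : S) :
    ∑ᶠ u, classCoupling R μ ν (u, v) = ν.f v := by
  simp_rw [classCoupling_swap hR h]
  exact finsum_classCoupling_fst hR (fun s => (h s).symm) v

theorem liftRel_of_mass_class_eq (hR : Equivalence R)
    (h : ∀ s, μ.mass {t | R s t} = ν.mass {t | R s t}) : LiftRel R μ ν :=
  LiftRel.of_coupling (classCoupling R μ ν) classCoupling_nonneg finite_support_classCoupling
    (fun _ => rel_of_classCoupling_ne_zero) (finsum_classCoupling_fst hR h)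
    (finsum_classCoupling_snd hR h)

end classCoupling

theorem liftRel_iff_mass_class_eq {R : S → S → Prop} (hR : Equivalence R) {μ ν : ProbDist S} :
    LiftRel R μ ν ↔ ∀ s, μ.mass {t | R s t} = ν.mass {t | R s t} :=
  ⟨fun h _ => mass_eq_of_liftRel
    (fun _ _ hab => ⟨(hR.trans · hab), (hR.trans · (hR.symm hab))⟩) h,
    liftRel_of_mass_class_eq hR⟩

end ProbDist

/-- The lifting of an equivalence relation on `S` is an equivalence relation on `D(S)`:
it is reflexive, symmetric and transitive. -/
theorem liftRel_equivalence {S : Type} (R : S → S → Prop) (hR : Equivalence R) :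
    Equivalence (ProbDist.LiftRel R) := by
  have hLift : ProbDist.LiftRel R = InvImage Eq fun μ s => μ.mass {t | R s t} := by
    ext μ ν
    rw [ProbDist.liftRel_iff_mass_class_eq hR, InvImage, funext_iff]
  exact hLift ▸ InvImage.equivalence _ _ eq_equivalence
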